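/- Fix a positive integer n, write n = 3q + r with q = ⌊n/3⌋ and 0 ≤ r ≤ 2, and let h be an integer with q + r < h ≤ n. Then the number of sequences σ ∈ {±1}^n with max(h(σ), h(−σ)) = h equals 2·C(n, ⌊(n−h)/2⌋). -/

import Mathlib

namespace Napkin

variable {n q : ℕ}

/-- The napkin to the left of seat `s`; napkin `s` itself is the one to the right of
seat `s`, placed between seats `s` and `s + 1` around the circular table. -/
def leftNapkin (s : Fin n) : Fin n := ⟨((s : ℕ) + (n - 1)) % n, Nat.mod_lt _ s.pos⟩

/-- Process the diners `0, 1, …, n-1` in their arrival order.  Here `w i = j` means that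
diner `j` sits in seat `i` (so diner `j` sits in seat `w.symm j`), and `σ j = true`
means diner `j` prefers the napkin to their right.  Each diner takes their preferred
adjacent napkin if it is unclaimed, otherwise the other adjacent napkin if it is
unclaimed, and otherwise is napkinless.  The returned state consists of the set of
claimed napkins and the set of napkinless diners. -/
def dine (σ : Fin n → Bool) (w : Equiv.Perm (Fin n)) :
    Finset (Fin n) × Finset (Fin n) :=
  (List.finRange n).foldl
    (fun st j =>
      let s := w.symm j
      let pref := if σ j then s else leftNapkin s
      let other := if σ j then leftNapkin s else s
      if pref ∉ st.1 then (insert pref st.1, st.2)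
      else if other ∉ st.1 then (insert other st.1, st.2)
      else (st.1, insert j st.2))
    (∅, ∅)

/-- The set of napkinless diners for the seating arrangement `(w, σ)`. -/
def napkinless (σ : Fin n → Bool) (w : Equiv.Perm (Fin n)) : Finset (Fin n) :=
  (dine σ w).2

/-- `ν(w,σ)`, the number of napkinless diners. -/
def nu (σ : Fin n → Bool) (w : Equiv.Perm (Fin n)) : ℕ := (napkinless σ w).card

/-- A seating order puts diner `1` in seat `1` (index `0` here). -/
def IsSeating (w : Equiv.Perm (Fin n)) : Prop :=
  ∀ i : Fin n, (i : ℕ) = 0 → (w i : ℕ) = 0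

instance : DecidablePred (IsSeating (n := n)) := fun w =>
  decidable_of_iff (∀ i : Fin n, (i : ℕ) = 0 → (w i : ℕ) = 0) Iff.rfl

/-- `ν_max(σ)`, the maximal number of napkinless diners over all seating orders. -/
def nuMax (σ : Fin n → Bool) : ℕ :=
  (Finset.univ.filter fun w : Equiv.Perm (Fin n) => IsSeating w).sup (nu σ)

/-- The value `±1` of a napkin preference. -/
def sign (b : Bool) : ℤ := if b then 1 else -1

/-- The drift `h(σ) = max(0, max over prefixes of σ₁ + ⋯ + σᵢ)`. -/
def drift (σ : Fin n → Bool) : ℕ :=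
  (Finset.range (n + 1)).sup fun i =>
    (∑ j ∈ Finset.univ.filter (fun j : Fin n => (j : ℕ) < i), sign (σ j)).toNat

/-- A bench collection: `q` pairwise disjoint triples `aᵢ < bᵢ < cᵢ` in `{1,…,n}`. -/
structure BenchCollection (n q : ℕ) where
  a : Fin q → Fin n
  b : Fin q → Fin n
  c : Fin q → Fin n
  hab : ∀ i, a i < b i
  hbc : ∀ i, b i < c i
  disj : ∀ i j : Fin q, i ≠ j →
    Disjoint ({a i, b i, c i} : Finset (Fin n)) ({a j, b j, c j} : Finset (Fin n))

/-- A bench is balanced when its two smallest members have opposite preferences. -/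
def Balanced (σ : Fin n → Bool) (β : BenchCollection n q) (i : Fin q) : Prop :=
  sign (σ (β.a i)) + sign (σ (β.b i)) = 0

instance (σ : Fin n → Bool) (β : BenchCollection n q) :
    DecidablePred (Balanced σ β) := fun i =>
  decidable_of_iff (sign (σ (β.a i)) + sign (σ (β.b i)) = 0) Iff.rfl

/-- `b(β,σ)`, the number of balanced benches of `β`. -/
def balance (σ : Fin n → Bool) (β : BenchCollection n q) : ℕ :=
  (Finset.univ.filter fun i => Balanced σ β i).card

/-!
Read `σ` as a ±1 walk `S₀ = 0, Sᵢ = σ₁ + ⋯ + σᵢ`. By the reflection principle (reflect the walk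
after it first hits `h`), `#{h(σ) ≥ h} = #{Sₙ ≥ h} + #{Sₙ ≥ h + 1}`. When `3h > n` a walk cannot
reach both `h` and `-h`, so `#{max(h(σ), h(-σ)) ≥ h} = 2 #{h(σ) ≥ h}`. Differencing in `h`, the count
in question is `2 #{Sₙ ∈ {h, h + 1}}`, and `Sₙ = n - 2k` with `k` the number of `-1`s, so
`Sₙ ∈ {h, h + 1}` exactly when `k = ⌊(n - h)/2⌋`.
-/

open Finset

lemma sign_not (b : Bool) : sign (!b) = -sign b := by cases b <;> simp [sign]

/-- The `m`-th step of the walk of `σ`, extended by `0` beyond `n`. -/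
def step (σ : Fin n → Bool) (m : ℕ) : ℤ :=
  if hm : m < n then sign (σ ⟨m, hm⟩) else 0

def walk (σ : Fin n → Bool) (i : ℕ) : ℤ := ∑ m ∈ range i, step σ m

section Walk

variable (σ : Fin n → Bool)

lemma abs_step_le (m : ℕ) : |step σ m| ≤ 1 := by
  unfold step
  split
  · cases σ _ <;> simp [sign]
  · simp

@[simp] lemma walk_zero : walk σ 0 = 0 := rfl

lemma walk_succ (i : ℕ) : walk σ (i + 1) = walk σ i + step σ i := sum_range_succ _ _

lemma abs_walk_sub_walk_le {a b : ℕ} (hab : a ≤ b) : |walk σ b - walk σ a| ≤ b - a := by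
  induction b, hab using Nat.le_induction with
  | base => simp
  | succ b hab ih =>
    have := abs_le.mp (abs_step_le σ b)
    rw [walk_succ, abs_le] at *
    push_cast
    constructor <;> linarith

lemma walk_not (i : ℕ) : walk (fun j => !σ j) i = -walk σ i := by
  rw [walk, walk, ← sum_neg_distrib]
  refine sum_congr rfl fun m _ => ?_
  unfold step
  split
  · exact sign_not _
  · simp

lemma sum_sign_eq_walk {i : ℕ} (hi : i ≤ n) :
    ∑ j ∈ univ.filter (fun j : Fin n => (j : ℕ) < i), sign (σ j) = walk σ i := by
  have hrange : (range n).filter (· < i) = range i := by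
    ext m
    simp only [mem_filter, mem_range]
    omega
  rw [sum_filter]
  calc ∑ j : Fin n, (if (j : ℕ) < i then sign (σ j) else 0)
      = ∑ j : Fin n, (if (j : ℕ) < i then step σ j else 0) := by simp [step]
    _ = ∑ m ∈ range n, if m < i then step σ m else 0 :=
      Fin.sum_univ_eq_sum_range (fun m => if m < i then step σ m else 0) n
    _ = walk σ i := by rw [← sum_filter, hrange, walk]

lemma le_drift_iff {h : ℕ} (hh : 0 < h) : h ≤ drift σ ↔ ∃ i ≤ n, (h : ℤ) ≤ walk σ i := by
  rw [drift, Finset.le_sup_iff hh]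
  constructor
  · rintro ⟨i, hi, hle⟩
    have hi : i ≤ n := Nat.lt_succ_iff.mp (mem_range.mp hi)
    exact ⟨i, hi, by rw [← sum_sign_eq_walk σ hi]; omega⟩
  · rintro ⟨i, hi, hle⟩
    exact ⟨i, mem_range.mpr (Nat.lt_succ_of_le hi), by rw [sum_sign_eq_walk σ hi]; omega⟩

lemma walk_eq_sub_two_mul_card_false : walk σ n = n - 2 * #{j | σ j = false} := by
  have hsign : ∀ b : Bool, sign b = 1 - 2 * if b = false then 1 else 0 := by
    intro b; cases b <;> norm_num [sign]
  rw [← sum_sign_eq_walk σ le_rfl, filter_true_of_mem fun j _ => j.isLt,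
    sum_congr rfl fun j _ => hsign (σ j), sum_sub_distrib, ← mul_sum, sum_boole]
  simp

end Walk

lemma card_filter_card_false_eq (k : ℕ) :
    #{σ : Fin n → Bool | #{j | σ j = false} = k} = n.choose k := by
  conv_rhs => rw [← card_fin n, ← card_powersetCard]
  refine card_nbij' (fun σ => ({j | σ j = false} : Finset (Fin n))) (fun s j => decide (j ∉ s))
    (fun σ hσ => ?_) (fun s hs => ?_) (fun σ _ => ?_) (fun s _ => ?_)
  · simpa using hσ
  · simpa [mem_powersetCard] using hs
  · funext j; simp
  · ext j; simp

lemma card_le_walk_eq_add_choose {h : ℕ} (hhn : h ≤ n) :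
    #{σ : Fin n → Bool | (h : ℤ) ≤ walk σ n}
      = #{σ : Fin n → Bool | (h : ℤ) + 2 ≤ walk σ n} + n.choose ((n - h) / 2) := by
  rw [← card_filter_card_false_eq, ← card_union_of_disjoint, ← filter_or]
  · congr 1
    refine filter_congr fun σ _ => ?_
    rw [walk_eq_sub_two_mul_card_false]
    omega
  · refine disjoint_filter.mpr fun σ _ => ?_
    rw [walk_eq_sub_two_mul_card_false]
    omega

def reflectFrom (t : ℕ) (σ : Fin n → Bool) : Fin n → Bool :=
  fun j => if t ≤ (j : ℕ) then !σ j else σ j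

section Reflection

variable (σ : Fin n → Bool) (t : ℕ)

lemma reflectFrom_reflectFrom : reflectFrom t (reflectFrom t σ) = σ := by
  funext j
  unfold reflectFrom
  split_ifs <;> simp

lemma walk_reflectFrom_of_le {i : ℕ} (hit : i ≤ t) : walk (reflectFrom t σ) i = walk σ i := by
  refine sum_congr rfl fun m hm => ?_
  have hmt : ¬t ≤ m := by rw [mem_range] at hm; omega
  simp [step, reflectFrom, hmt]

lemma walk_reflectFrom_of_ge {i : ℕ} (hti : t ≤ i) :
    walk (reflectFrom t σ) i = 2 * walk σ t - walk σ i := by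
  induction i, hti using Nat.le_induction with
  | base => rw [walk_reflectFrom_of_le σ t le_rfl]; ring
  | succ i hti ih =>
    have hstep : step (reflectFrom t σ) i = -step σ i := by
      unfold step reflectFrom
      split
      · simp only [sign_not]
      · simp
    rw [walk_succ, walk_succ, ih, hstep]
    ring

end Reflection

def hitTime (h : ℕ) (σ : Fin n → Bool) : ℕ :=
  Nat.find (⟨n + 1, Or.inr rfl⟩ : ∃ i, (h : ℤ) ≤ walk σ i ∨ i = n + 1)

section HitTime

variable {h : ℕ} {σ : Fin n → Bool}

lemma hitTime_spec : (h : ℤ) ≤ walk σ (hitTime h σ) ∨ hitTime h σ = n + 1 :=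
  Nat.find_spec (⟨n + 1, Or.inr rfl⟩ : ∃ i, (h : ℤ) ≤ walk σ i ∨ i = n + 1)

lemma walk_lt_of_lt_hitTime {i : ℕ} (hi : i < hitTime h σ) : walk σ i < h := by
  have := Nat.find_min _ hi
  push Not at this
  exact this.1

variable (hσ : ∃ i ≤ n, (h : ℤ) ≤ walk σ i)
include hσ

lemma hitTime_le : hitTime h σ ≤ n := by
  obtain ⟨i, hi, hle⟩ := hσ
  exact (Nat.find_min' _ (Or.inl hle)).trans hi

lemma walk_hitTime (hh : 0 < h) : walk σ (hitTime h σ) = h := by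
  have hreach : (h : ℤ) ≤ walk σ (hitTime h σ) :=
    hitTime_spec.resolve_right (by have := hitTime_le hσ; omega)
  obtain ⟨t, ht⟩ := Nat.exists_eq_add_one_of_ne_zero
    (fun h0 : hitTime h σ = 0 => by rw [h0, walk_zero] at hreach; omega)
  have hbefore := walk_lt_of_lt_hitTime (show t < hitTime h σ by omega)
  have hstep := abs_le.mp (abs_step_le σ t)
  rw [ht, walk_succ] at hreach ⊢
  omega

lemma hitTime_reflectFrom_hitTime (hh : 0 < h) :
    hitTime h (reflectFrom (hitTime h σ) σ) = hitTime h σ := by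
  refine le_antisymm (Nat.find_min' _ (Or.inl ?_)) ((Nat.le_find_iff _ _).mpr fun i hi => ?_)
  · rw [walk_reflectFrom_of_le σ _ le_rfl, walk_hitTime hσ hh]
  · have := walk_lt_of_lt_hitTime hi
    have := hitTime_le hσ
    rw [walk_reflectFrom_of_le σ _ hi.le]
    omega

end HitTime

lemma card_le_drift {h : ℕ} (hh : 0 < h) :
    #{σ : Fin n → Bool | h ≤ drift σ}
      = #{σ : Fin n → Bool | (h : ℤ) ≤ walk σ n}
        + #{σ : Fin n → Bool | (h : ℤ) + 1 ≤ walk σ n} := by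
  let reflect (σ : Fin n → Bool) := reflectFrom (hitTime h σ) σ
  have reflect_reflect : ∀ σ, (∃ i ≤ n, (h : ℤ) ≤ walk σ i) → reflect (reflect σ) = σ :=
    fun σ hσ => by simp only [reflect, hitTime_reflectFrom_hitTime hσ hh, reflectFrom_reflectFrom]
  have walk_reflect : ∀ σ, (∃ i ≤ n, (h : ℤ) ≤ walk σ i) →
      walk (reflect σ) n = 2 * h - walk σ n := fun σ hσ => by
    rw [walk_reflectFrom_of_ge σ _ (hitTime_le hσ), walk_hitTime hσ hh]
  rw [← card_filter_add_card_filter_not (s := {σ : Fin n → Bool | h ≤ drift σ})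
    (fun σ => (h : ℤ) ≤ walk σ n), filter_filter, filter_filter]
  congr 1
  · refine congrArg card (filter_congr fun σ _ => ⟨And.right, fun hσ => ⟨?_, hσ⟩⟩)
    exact (le_drift_iff σ hh).mpr ⟨n, le_rfl, hσ⟩
  · refine card_nbij' reflect reflect (fun σ hσ => ?_) (fun σ hσ => ?_) (fun σ hσ => ?_)
      (fun σ hσ => ?_) <;> simp only [coe_filter, mem_univ, true_and, Set.mem_ofPred_eq] at hσ ⊢
    · rw [walk_reflect σ ((le_drift_iff σ hh).mp hσ.1)]
      omega
    · have hσ' : ∃ i ≤ n, (h : ℤ) ≤ walk σ i := ⟨n, le_rfl, by omega⟩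
      rw [le_drift_iff _ hh, walk_reflect σ hσ']
      refine ⟨⟨hitTime h σ, hitTime_le hσ', ?_⟩, by omega⟩
      rw [walk_reflectFrom_of_le σ _ le_rfl, walk_hitTime hσ' hh]
    · exact reflect_reflect σ ((le_drift_iff σ hh).mp hσ.1)
    · exact reflect_reflect σ ⟨n, le_rfl, by omega⟩

/-- A walk of length `n < 3h` reaching `h` needs `2h > n - h` more steps to reach `-h`. -/
lemma not_le_drift_and_le_drift_not {h : ℕ} (h3 : n < 3 * h) (σ : Fin n → Bool) :
    ¬(h ≤ drift σ ∧ h ≤ drift fun j => !σ j) := by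
  rintro ⟨hσ, hnσ⟩
  obtain ⟨i, hi, hwi⟩ := (le_drift_iff σ (by omega)).mp hσ
  obtain ⟨j, hj, hwj⟩ := (le_drift_iff _ (by omega)).mp hnσ
  rw [walk_not] at hwj
  have h0i := abs_le.mp (abs_walk_sub_walk_le σ (Nat.zero_le i))
  have h0j := abs_le.mp (abs_walk_sub_walk_le σ (Nat.zero_le j))
  rcases le_total i j with hij | hij <;>
  · have := abs_le.mp (abs_walk_sub_walk_le σ hij)
    simp only [walk_zero, sub_zero, Nat.cast_zero] at *
    omega

lemma card_filter_not (p : (Fin n → Bool) → Prop) [DecidablePred p] :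
    #{σ : Fin n → Bool | p fun j => !σ j} = #{σ : Fin n → Bool | p σ} := by
  have hnot : Function.Involutive fun (σ : Fin n → Bool) j => !σ j :=
    fun σ => funext fun j => Bool.not_not _
  exact card_equiv hnot.toPerm (by simp)

lemma card_le_max_drift {h : ℕ} (h3 : n < 3 * h) :
    #{σ : Fin n → Bool | h ≤ max (drift σ) (drift fun j => !σ j)}
      = 2 * #{σ : Fin n → Bool | h ≤ drift σ} := by
  rw [two_mul]
  nth_rw 2 [← card_filter_not (fun σ => h ≤ drift σ)]
  rw [← card_union_of_disjoint, ← filter_or]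
  · simp only [le_max_iff]
  · exact disjoint_filter.mpr fun σ _ hσ hnσ => not_le_drift_and_le_drift_not h3 σ ⟨hσ, hnσ⟩

lemma card_filter_eq_add_card_filter_succ_le {α : Type*} [Fintype α] (f : α → ℕ) (h : ℕ) :
    #{a | f a = h} + #{a | h + 1 ≤ f a} = #{a | h ≤ f a} := by
  classical
  rw [← card_union_of_disjoint, ← filter_or]
  · congr 1
    exact filter_congr fun a _ => by omega
  · exact disjoint_filter.mpr fun a _ => by omega

theorem statement12_general (n q r : ℕ) (hnr : n = 3 * q + r)
    (h : ℕ) (h1 : q + r < h) (h2 : h ≤ n) :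
    ((Finset.univ : Finset (Fin n → Bool)).filter
        fun σ => max (drift σ) (drift fun j => !σ j) = h).card
      = 2 * n.choose ((n - h) / 2) := by
  have hsplit := card_filter_eq_add_card_filter_succ_le
    (fun σ : Fin n → Bool => max (drift σ) (drift fun j => !σ j)) h
  rw [card_le_max_drift (by omega), card_le_max_drift (by omega), card_le_drift (by omega),
    card_le_drift (by omega), card_le_walk_eq_add_choose h2] at hsplit
  push_cast at hsplit
  rw [show (h : ℤ) + 1 + 1 = h + 2 by ring] at hsplit
  omega

/-- Writing `n = 3q + r` with `q = ⌊n/3⌋`, for any integer `h` with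
`q + r < h ≤ n`, the number of sequences `σ ∈ {±1}ⁿ` with `max(h(σ), h(-σ)) = h`
equals `2·C(n, ⌊(n-h)/2⌋)`. -/
theorem statement12 (n q r : ℕ) (hn : 1 ≤ n) (hq : q = n / 3) (hnr : n = 3 * q + r)
    (h : ℕ) (h1 : q + r < h) (h2 : h ≤ n) :
    ((Finset.univ : Finset (Fin n → Bool)).filter
        fun σ => max (drift σ) (drift fun j => !σ j) = h).card
      = 2 * n.choose ((n - h) / 2) :=
  statement12_general n q r hnr h h1 h2

end Napkin
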